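/- Let ℬ₀ ⊆ ℂ^{N×M} and ℬ₁ ⊆ {Hermitian PSD N×N matrices} be sets, Q̂ ∈ ℂ^{N×M}, R̂ Hermitian, with ℬ₀ = {Q : ‖Q - Q̂‖_F ≤ √η} and η < ‖Q̂‖_F². Then for any nonzero w ∈ ℂ^N, the infimum over Q ∈ ℬ₀ of ‖Q^H w‖ equals max{‖Q̂^H w‖ - √η ‖w‖, 0}. -/

import Mathlib

open Matrix Complex
open scoped ComplexOrder

/-- The largest real eigenvalue of a complex matrix (as `sSup` of its set of real
eigenvalues); for a Hermitian matrix this is the largest eigenvalue. -/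
noncomputable def lambdaMax {N : ℕ} (A : Matrix (Fin N) (Fin N) ℂ) : ℝ :=
  sSup {t : ℝ | ∃ v : Fin N → ℂ, v ≠ 0 ∧ A.mulVec v = (t : ℂ) • v}

open Classical in
/-- The inverse of the positive definite square root of a positive definite matrix
(junk value `0` if the matrix is not positive definite). -/
noncomputable def isqrt {N : ℕ} (R : Matrix (Fin N) (Fin N) ℂ) : Matrix (Fin N) (Fin N) ℂ :=
  if h : R.PosDef then
    (h.posSemidef.1.eigenvectorUnitary.1 *
      diagonal ((↑) ∘ (√·) ∘ h.posSemidef.1.eigenvalues) *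
      (star h.posSemidef.1.eigenvectorUnitary : Matrix (Fin N) (Fin N) ℂ))⁻¹ else 0

/-- Euclidean norm of a complex vector. -/
noncomputable def vecNorm {N : ℕ} (v : Fin N → ℂ) : ℝ :=
  Real.sqrt (∑ i, Complex.normSq (v i))

/-- Frobenius norm of a complex matrix. -/
noncomputable def frobNorm {N M : ℕ} (X : Matrix (Fin N) (Fin M) ℂ) : ℝ :=
  Real.sqrt (∑ i, ∑ j, Complex.normSq (X i j))

/-!
The map `Q ↦ Qᴴ w` sends the Frobenius ball of radius `√η` about `Q̂` onto the Euclidean ball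
of radius `√η ‖w‖` about `Q̂ᴴ w`: Cauchy–Schwarz gives one inclusion, and a rank-one
perturbation `Q̂ + (w dᴴ / ‖w‖²)ᴴ` reaches `Q̂ᴴ w + d`. On a ball `B(u, ρ)` the least norm is
`max (‖u‖ - ρ) 0`, attained at `0` or at `(1 - ρ / ‖u‖) u`.
-/

open Metric WithLp
open scoped Matrix.Norms.Frobenius

theorem isLeast_norm_image_closedBall {E : Type*} [SeminormedAddCommGroup E] [NormedSpace ℝ E]
    (u : E) {ρ : ℝ} (hρ : 0 ≤ ρ) :
    IsLeast (norm '' closedBall u ρ) (max (‖u‖ - ρ) 0) := by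
  refine ⟨?_, ?_⟩
  · rcases le_or_gt ‖u‖ ρ with hu | hu
    · exact ⟨0, by simpa [dist_comm] using hu, by simp [hu]⟩
    · have hu₀ : 0 < ‖u‖ := hρ.trans_lt hu
      refine ⟨(1 - ρ / ‖u‖) • u, ?_, ?_⟩
      · rw [mem_closedBall, dist_eq_norm, sub_smul, one_smul, sub_sub_cancel_left, norm_neg,
          norm_smul, Real.norm_of_nonneg (by positivity), div_mul_cancel₀ _ hu₀.ne']
      · rw [norm_smul, Real.norm_of_nonneg (by rw [sub_nonneg, div_le_one hu₀]; exact hu.le),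
          max_eq_left (by linarith)]
        field_simp
  · rintro _ ⟨v, hv, rfl⟩
    rw [mem_closedBall, dist_comm, dist_eq_norm] at hv
    exact max_le (by linarith [norm_sub_norm_le u v]) (norm_nonneg v)

namespace Matrix

variable {m n 𝕜 : Type*} [Fintype m] [Fintype n] [RCLike 𝕜]

lemma norm_toLp_star (v : n → 𝕜) : ‖toLp 2 (star v)‖ = ‖toLp 2 v‖ := by
  simp [EuclideanSpace.norm_eq]

lemma star_dotProduct_self_eq_norm_sq (v : n → 𝕜) :
    star v ⬝ᵥ v = ((‖toLp 2 v‖ ^ 2 : ℝ) : 𝕜) := by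
  rw [dotProduct_comm, ← EuclideanSpace.inner_toLp_toLp, inner_self_eq_norm_sq_to_K]
  push_cast; rfl

theorem frobenius_norm_mulVec_le (A : Matrix m n 𝕜) (v : n → 𝕜) :
    ‖toLp 2 (A *ᵥ v)‖ ≤ ‖A‖ * ‖toLp 2 v‖ := by
  simpa [← replicateCol_mulVec (ι := Unit)] using frobenius_norm_mul A (replicateCol Unit v)

theorem frobenius_norm_vecMulVec_le (u : m → 𝕜) (v : n → 𝕜) :
    ‖vecMulVec u v‖ ≤ ‖toLp 2 u‖ * ‖toLp 2 v‖ := by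
  simpa [← vecMulVec_eq Unit] using frobenius_norm_mul (replicateCol Unit u) (replicateRow Unit v)

theorem image_conjTranspose_mulVec_closedBall (Q₀ : Matrix m n 𝕜) {w : m → 𝕜} (hw : w ≠ 0)
    (r : ℝ) :
    (fun Q : Matrix m n 𝕜 ↦ toLp 2 (Qᴴ *ᵥ w)) '' closedBall Q₀ r =
      closedBall (toLp 2 (Q₀ᴴ *ᵥ w)) (r * ‖toLp 2 w‖) := by
  ext v
  constructor
  · rintro ⟨Q, hQ, rfl⟩
    rw [mem_closedBall, dist_eq_norm, ← toLp_sub, ← sub_mulVec, ← conjTranspose_sub]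
    calc ‖toLp 2 ((Q - Q₀)ᴴ *ᵥ w)‖ ≤ ‖(Q - Q₀)ᴴ‖ * ‖toLp 2 w‖ := frobenius_norm_mulVec_le _ _
      _ ≤ r * ‖toLp 2 w‖ := by
        rw [frobenius_norm_conjTranspose, ← dist_eq_norm]
        exact mul_le_mul_of_nonneg_right hQ (norm_nonneg _)
  · intro hv
    have hw₀ : 0 < ‖toLp 2 w‖ := by simpa using hw
    set d := ofLp v - Q₀ᴴ *ᵥ w
    set c : 𝕜 := (((‖toLp 2 w‖ ^ 2)⁻¹ : ℝ) : 𝕜) with hc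
    refine ⟨Q₀ + (c • vecMulVec d (star w))ᴴ, ?_, ?_⟩
    · rw [mem_closedBall, dist_self_add_left, frobenius_norm_conjTranspose, norm_smul]
      calc ‖c‖ * ‖vecMulVec d (star w)‖ ≤ ‖c‖ * (‖toLp 2 d‖ * ‖toLp 2 w‖) := by
            gcongr
            simpa [norm_toLp_star] using frobenius_norm_vecMulVec_le d (star w)
        _ ≤ r := by
          have hd : ‖toLp 2 d‖ ≤ r * ‖toLp 2 w‖ := by
            simpa [d, dist_eq_norm] using hv
          rw [RCLike.norm_ofReal, abs_of_pos (by positivity)]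
          field_simp
          nlinarith
    · simp only [conjTranspose_add, conjTranspose_conjTranspose, add_mulVec, smul_mulVec,
        vecMulVec_mulVec, op_smul_eq_smul, smul_smul, star_dotProduct_self_eq_norm_sq]
      rw [hc, ← RCLike.ofReal_mul, inv_mul_cancel₀ (by positivity), RCLike.ofReal_one, one_smul,
        add_sub_cancel, toLp_ofLp]

end Matrix

lemma vecNorm_eq_norm_toLp {N : ℕ} (v : Fin N → ℂ) : vecNorm v = ‖toLp 2 v‖ := by
  simp [vecNorm, EuclideanSpace.norm_eq, Complex.normSq_eq_norm_sq]

lemma frobNorm_eq_norm {N M : ℕ} (X : Matrix (Fin N) (Fin M) ℂ) : frobNorm X = ‖X‖ := by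
  simp [frobNorm, frobenius_norm_def, Complex.normSq_eq_norm_sq, Real.sqrt_eq_rpow]

theorem inf_norm_over_frobenius_ball_general {N M : ℕ}
    (Qhat : Matrix (Fin N) (Fin M) ℂ) (η : ℝ)
    (w : Fin N → ℂ) (hw : w ≠ 0) :
    IsGLB
      {r : ℝ | ∃ Q : Matrix (Fin N) (Fin M) ℂ,
        frobNorm (Q - Qhat) ≤ Real.sqrt η ∧ r = vecNorm (Qᴴ.mulVec w)}
      (max (vecNorm (Qhatᴴ.mulVec w) - Real.sqrt η * vecNorm w) 0) := by
  have hset : {r : ℝ | ∃ Q : Matrix (Fin N) (Fin M) ℂ,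
      frobNorm (Q - Qhat) ≤ Real.sqrt η ∧ r = vecNorm (Qᴴ.mulVec w)} =
      norm '' ((fun Q : Matrix (Fin N) (Fin M) ℂ ↦ toLp 2 (Qᴴ *ᵥ w)) '' closedBall Qhat √η) := by
    ext r
    simp [vecNorm_eq_norm_toLp, frobNorm_eq_norm, dist_eq_norm, eq_comm]
  rw [hset, image_conjTranspose_mulVec_closedBall Qhat hw, vecNorm_eq_norm_toLp,
    vecNorm_eq_norm_toLp]
  exact (isLeast_norm_image_closedBall _ (by positivity)).isGLB

/-- for the Frobenius ball `ℬ₀ = {Q : ‖Q - Q̂‖_F ≤ √η}` with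
`η < ‖Q̂‖_F²`, and any nonzero `w`, `inf_{Q ∈ ℬ₀} ‖Qᴴ w‖ = max{‖Q̂ᴴ w‖ - √η ‖w‖, 0}`. -/
theorem inf_norm_over_frobenius_ball {N M : ℕ}
    (Qhat : Matrix (Fin N) (Fin M) ℂ) (η : ℝ) (hη : 0 < η)
    (hsmall : η < frobNorm Qhat ^ 2)
    (w : Fin N → ℂ) (hw : w ≠ 0) :
    IsGLB
      {r : ℝ | ∃ Q : Matrix (Fin N) (Fin M) ℂ,
        frobNorm (Q - Qhat) ≤ Real.sqrt η ∧ r = vecNorm (Qᴴ.mulVec w)}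
      (max (vecNorm (Qhatᴴ.mulVec w) - Real.sqrt η * vecNorm w) 0) :=
  inf_norm_over_frobenius_ball_general Qhat η w hw
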